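/- Let d ≥ 1 and let k be an integer with 1 ≤ k ≤ d. The number of (d−1)-dimensional exposed faces (facets) of ρ_{d,k} equals 2^k · binom(d,k). -/

import Mathlib

/-!
Since `0` is an interior point of `ρ = ρ_{d,k}`, every proper exposed face of `ρ` is
`ρ ∩ {⟪u, x⟫ = 1}` for some `u` with `⟪u, ·⟫ ≤ 1` on `ρ`, that is `|u i| ≤ 1` and `∑ |u i| ≤ k`.
Such a face lies in the convex hull of its traces on `β_d` and on `(1/k) γ_d`, where the equality
cases of the two bounds give `x j = 0` whenever `|u j| < 1`, resp. `u j * x j = |u j| / k`.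
If the face is a facet it spans the hyperplane `u^⊥`, so no functional independent of `u` is
constant on it. For `e j` with `|u j| < 1` this forces `∑ |u i| = k`; for
`sign (u i) e i - sign (u j) e j` it shows that at most one `|u i|` lies strictly between `0`
and `1`, and integrality of `∑ |u i| = k` excludes that one. So `u` is a sign vector with `k`
nonzero entries. Conversely, for such a sign vector `ε` the face contains `ε / k`, the vertices
`ε i • e i` of `β_d` and the points `ε / k + e j / k` with `ε j = 0`, whose differences span `ε^⊥`.
-/

open scoped Pointwise

noncomputable section

/-- The hypercube `γ_d = [-1,1]^d` in `ℝ^d`. -/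
def hcube (d : ℕ) : Set (EuclideanSpace ℝ (Fin d)) := {x | ∀ i, |x i| ≤ 1}

/-- The cross-polytope `β_d = {x : ∑ |x_i| ≤ 1}` in `ℝ^d`. -/
def cross (d : ℕ) : Set (EuclideanSpace ℝ (Fin d)) := {x | ∑ i, |x i| ≤ 1}

/-- The polytope `ρ_{d,k} = conv(β_d ∪ (1/k)γ_d)`. -/
def rho (d : ℕ) (k : ℝ) : Set (EuclideanSpace ℝ (Fin d)) :=
  convexHull ℝ (cross d ∪ (1 / k) • hcube d)

open Module Finset
open scoped RealInnerProductSpace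

theorem card_signType_fun_with_card_ne_zero {ι : Type*} [Fintype ι] [DecidableEq ι] (k : ℕ) :
    #{ε : ι → SignType | #{i | ε i ≠ 0} = k} = (Fintype.card ι).choose k * 2 ^ k := by
  have hfiber (s : Finset ι) : #{ε : ι → SignType | ({i | ε i ≠ 0} : Finset ι) = s} = 2 ^ #s := by
    have : ({ε : ι → SignType | ({i | ε i ≠ 0} : Finset ι) = s} : Finset _) =
        Fintype.piFinset fun i => if i ∈ s then {-1, 1} else {0} := by
      ext ε
      simp only [mem_filter, mem_univ, true_and, Fintype.mem_piFinset, Finset.ext_iff]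
      refine forall_congr' fun i => ?_
      rcases ε i with _ | _ | _ <;> by_cases hi : i ∈ s <;> simp [hi]
    rw [this, Fintype.card_piFinset]
    simp [apply_ite Finset.card, prod_ite_mem]
  rw [card_eq_sum_card_fiberwise (f := fun ε => ({i | ε i ≠ 0} : Finset ι))
    (t := powersetCard k univ) (fun ε hε => by simpa using hε), sum_congr rfl (g := fun _ => 2 ^ k)]
  · simp
  intro s hs
  rw [mem_powersetCard] at hs
  rw [← hs.2, ← hfiber, filter_filter]
  congr 1
  ext ε
  simp only [mem_filter, mem_univ, true_and]
  exact ⟨fun h => h.2, fun h => ⟨h ▸ rfl, h⟩⟩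

section InnerProductSpace

variable {E : Type*} [NormedAddCommGroup E] [InnerProductSpace ℝ E]

theorem vectorSpan_le_orthogonal_of_inner_eq {F : Set E} {u : E} {c : ℝ}
    (hF : ∀ x ∈ F, ⟪u, x⟫ = c) : vectorSpan ℝ F ≤ (ℝ ∙ u)ᗮ := by
  rw [vectorSpan_def, Submodule.span_le]
  rintro _ ⟨x, hx, y, hy, rfl⟩
  simp [Submodule.mem_orthogonal_singleton_iff_inner_right, inner_sub_right, hF x hx, hF y hy]

variable [FiniteDimensional ℝ E]

theorem finrank_orthogonal_span_singleton_eq_sub_one {u : E} (hu : u ≠ 0) :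
    finrank ℝ (ℝ ∙ u)ᗮ = finrank ℝ E - 1 := by
  have := Submodule.finrank_add_finrank_orthogonal (ℝ ∙ u)
  rw [finrank_span_singleton hu] at this
  omega

theorem vectorSpan_eq_orthogonal_of_finrank_eq {F : Set E} {u : E} {c : ℝ}
    (hF : ∀ x ∈ F, ⟪u, x⟫ = c) (hu : u ≠ 0)
    (hdim : finrank ℝ (vectorSpan ℝ F) = finrank ℝ E - 1) : vectorSpan ℝ F = (ℝ ∙ u)ᗮ :=
  Submodule.eq_of_le_of_finrank_eq (vectorSpan_le_orthogonal_of_inner_eq hF)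
    (hdim.trans (finrank_orthogonal_span_singleton_eq_sub_one hu).symm)

theorem eq_zero_of_inner_eq_zero_of_finrank_vectorSpan_eq {F : Set E} {u w : E}
    (hF : ∀ x ∈ F, ⟪u, x⟫ = 1) (hne : F.Nonempty)
    (hdim : finrank ℝ (vectorSpan ℝ F) = finrank ℝ E - 1) (hw : ∀ x ∈ F, ⟪w, x⟫ = 0) :
    w = 0 := by
  obtain ⟨x, hx⟩ := hne
  have hu : u ≠ 0 := by rintro rfl; simpa using hF x hx
  have hwu : w ∈ ℝ ∙ u := by
    rw [← Submodule.orthogonal_orthogonal (ℝ ∙ u),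
      ← vectorSpan_eq_orthogonal_of_finrank_eq hF hu hdim]
    refine (Submodule.mem_orthogonal _ _).2 fun v hv => ?_
    have := vectorSpan_le_orthogonal_of_inner_eq hw hv
    rwa [Submodule.mem_orthogonal_singleton_iff_inner_right, real_inner_comm] at this
  obtain ⟨c, rfl⟩ := Submodule.mem_span_singleton.1 hwu
  have := hw x hx
  rw [inner_smul_left, hF x hx] at this
  simp_all

end InnerProductSpace

theorem IsExtreme.subset_of_convexHull_union {E : Type*} [AddCommGroup E] [Module ℝ E]
    {s t F C : Set E} (hs : Convex ℝ s) (ht : Convex ℝ t) (hs₀ : s.Nonempty) (ht₀ : t.Nonempty)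
    (hF : IsExtreme ℝ (convexHull ℝ (s ∪ t)) F) (hC : Convex ℝ C)
    (hsC : F ∩ s ⊆ C) (htC : F ∩ t ⊆ C) : F ⊆ C := by
  intro x hx
  obtain ⟨a, ha, b, hb, hxab⟩ := mem_convexJoin.1 <| hs.convexHull_union ht hs₀ ht₀ ▸ hF.subset hx
  by_cases hxa : a = x
  · exact hsC ⟨hxa ▸ hx, hxa ▸ ha⟩
  by_cases hxb : b = x
  · exact htC ⟨hxb ▸ hx, hxb ▸ hb⟩
  have hopen := mem_openSegment_of_ne_left_right hxa hxb hxab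
  have hmem (y : E) (hy : y ∈ s ∪ t) : y ∈ convexHull ℝ (s ∪ t) := subset_convexHull ℝ _ hy
  have haF := hF.left_mem_of_mem_openSegment (hmem a (.inl ha)) (hmem b (.inr hb)) hx hopen
  have hbF := hF.right_mem_of_mem_openSegment (hmem a (.inl ha)) (hmem b (.inr hb)) hx hopen
  exact hC.segment_subset (hsC ⟨haF, ha⟩) (htC ⟨hbF, hb⟩) hxab

theorem abs_eq_zero_or_one_of_sum_abs_eq {ι : Type*} [Fintype ι] {u : ι → ℝ} {k : ℕ}
    (hsum : ∑ i, |u i| = k) (hu : ∀ i, |u i| ≤ 1)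
    (hmid : ∀ i j, |u i| ∈ Set.Ioo 0 1 → |u j| ∈ Set.Ioo 0 1 → i = j) (i : ι) :
    |u i| = 0 ∨ |u i| = 1 := by
  classical
  by_contra! h
  have hi : |u i| ∈ Set.Ioo 0 1 :=
    ⟨(abs_nonneg _).lt_of_ne h.1.symm, (hu i).lt_of_ne h.2⟩
  have hrest : ∑ j ∈ univ.erase i, |u j| = #{j ∈ univ.erase i | |u j| = 1} := by
    rw [natCast_card_filter]
    refine sum_congr rfl fun j hj => ?_
    have : |u j| ∉ Set.Ioo 0 1 := fun hj' => ne_of_mem_erase hj (hmid j i hj' hi)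
    rcases (abs_nonneg (u j)).eq_or_lt with h0 | h0
    · simp [← h0]
    · have h1 : |u j| = 1 := by
        by_contra h1; exact this ⟨h0, (hu j).lt_of_ne h1⟩
      simp [h1]
  rw [← add_sum_erase _ _ (mem_univ i), hrest] at hsum
  have h1 : (#{j ∈ univ.erase i | |u j| = 1} : ℝ) < k := by linarith [hi.1]
  have h2 : (k : ℝ) < #{j ∈ univ.erase i | |u j| = 1} + 1 := by linarith [hi.2]
  norm_cast at h1 h2
  omega

theorem abs_mul_add_mul_le {a b s t : ℝ} (ha : 0 ≤ a) (hb : 0 ≤ b) :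
    |a * s + b * t| ≤ a * |s| + b * |t| := by
  simpa [abs_mul, abs_of_nonneg ha, abs_of_nonneg hb] using abs_add_le (a * s) (b * t)

section Rho

variable {d : ℕ}

local notation "𝔼" => EuclideanSpace ℝ (Fin d)

theorem inner_eq_sum_mul (u x : 𝔼) : ⟪u, x⟫ = ∑ i, u i * x i := by
  simp [PiLp.inner_apply, mul_comm]

theorem convex_cross : Convex ℝ (cross d) := by
  intro x hx y hy a b ha hb hab
  calc ∑ i, |a * x i + b * y i| ≤ ∑ i, (a * |x i| + b * |y i|) :=
        sum_le_sum fun i _ => abs_mul_add_mul_le ha hb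
    _ = a * ∑ i, |x i| + b * ∑ i, |y i| := by rw [sum_add_distrib, mul_sum, mul_sum]
    _ ≤ 1 := by nlinarith [hx.out, hy.out]

theorem convex_hcube : Convex ℝ (hcube d) := by
  intro x hx y hy a b ha hb hab i
  calc |a * x i + b * y i| ≤ a * |x i| + b * |y i| := abs_mul_add_mul_le ha hb
    _ ≤ 1 := by nlinarith [hx i, hy i]

theorem mem_smul_hcube {r : ℝ} (hr : 0 < r) {x : 𝔼} : x ∈ r • hcube d ↔ ∀ i, |x i| ≤ r := by
  refine ⟨?_, fun hx => ⟨r⁻¹ • x, fun i => ?_, smul_inv_smul₀ hr.ne' x⟩⟩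
  · rintro ⟨y, hy, rfl⟩ i
    simpa [abs_mul, abs_of_pos hr] using mul_le_mul_of_nonneg_left (hy i) hr.le
  · simpa [abs_mul, abs_of_pos hr, inv_mul_le_one₀ hr] using hx i

theorem cross_subset_rho (k : ℝ) : cross d ⊆ rho d k :=
  Set.subset_union_left.trans (subset_convexHull ℝ _)

theorem smul_hcube_subset_rho (k : ℝ) : (1 / k) • hcube d ⊆ rho d k :=
  Set.subset_union_right.trans (subset_convexHull ℝ _)

theorem single_mem_cross (i : Fin d) {a : ℝ} (ha : |a| ≤ 1) :
    EuclideanSpace.single i a ∈ cross d := by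
  show ∑ j, |EuclideanSpace.single i a j| ≤ 1
  simpa [PiLp.single_apply, apply_ite] using ha

theorem vectorSpan_rho (k : ℝ) : vectorSpan ℝ (rho d k) = ⊤ := by
  refine eq_top_iff.2 <| (EuclideanSpace.basisFun (Fin d) ℝ).toBasis.span_eq.ge.trans <|
    Submodule.span_le.2 ?_
  rintro _ ⟨i, rfl⟩
  have h0 : (0 : 𝔼) ∈ rho d k := cross_subset_rho k (by simp [cross])
  simpa using vsub_mem_vectorSpan ℝ (cross_subset_rho k (single_mem_cross i (a := 1) (by simp))) h0

theorem inner_le_one_of_mem_rho {k : ℝ} (hk : 0 < k) {u : 𝔼} (hu : ∀ i, |u i| ≤ 1)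
    (hsum : ∑ i, |u i| ≤ k) {y : 𝔼} (hy : y ∈ rho d k) : ⟪u, y⟫ ≤ 1 := by
  have hconv : Convex ℝ {y : 𝔼 | ⟪u, y⟫ ≤ 1} :=
    convex_halfSpace_le (innerₛₗ ℝ u).isLinear 1
  refine convexHull_min (Set.union_subset (fun a ha => ?_) (fun b hb => ?_)) hconv hy
  · calc ⟪u, a⟫ = ∑ i, u i * a i := inner_eq_sum_mul u a
      _ ≤ ∑ i, |a i| := sum_le_sum fun i _ =>
          (le_abs_self _).trans (by rw [abs_mul]; exact mul_le_of_le_one_left (abs_nonneg _) (hu i))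
      _ ≤ 1 := ha
  · rw [mem_smul_hcube (by positivity)] at hb
    calc ⟪u, b⟫ = ∑ i, u i * b i := inner_eq_sum_mul u b
      _ ≤ ∑ i, |u i| * (1 / k) := sum_le_sum fun i _ => (le_abs_self _).trans
          (by rw [abs_mul]; exact mul_le_mul_of_nonneg_left (hb i) (abs_nonneg _))
      _ ≤ 1 := by rw [← sum_mul]; field_simp; exact hsum

theorem abs_le_of_inner_le_on_rho {k m : ℝ} {u : 𝔼} (hu : ∀ y ∈ rho d k, ⟪u, y⟫ ≤ m) (i : Fin d) :
    |u i| ≤ m := by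
  have := hu _ (cross_subset_rho k (single_mem_cross i (a := SignType.sign (u i)) ?_))
  · simpa [EuclideanSpace.inner_single_right, mul_comm, sign_mul_self] using this
  · rcases lt_trichotomy (u i) 0 with h | h | h <;> simp [h]

theorem sum_abs_le_of_inner_le_on_rho {k m : ℝ} (hk : 0 < k) {u : 𝔼}
    (hu : ∀ y ∈ rho d k, ⟪u, y⟫ ≤ m) : ∑ i, |u i| ≤ k * m := by
  have := hu (WithLp.toLp 2 fun i => SignType.sign (u i) / k) <| smul_hcube_subset_rho k <|
    (mem_smul_hcube (by positivity)).2 fun i => ?_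
  · have hval : ∑ i, u i * (SignType.sign (u i) / k) = (∑ i, |u i|) / k := by
      rw [sum_div]
      exact sum_congr rfl fun i _ => by rw [← sign_mul_self, mul_div_assoc', mul_comm (u i)]
    rwa [inner_eq_sum_mul, hval, div_le_iff₀' hk] at this
  · rcases lt_trichotomy (u i) 0 with h | h | h <;> simp [h, abs_div, abs_of_pos hk, hk.le]

theorem apply_eq_zero_of_inner_eq_one_of_mem_cross {u a : 𝔼} (hu : ∀ i, |u i| ≤ 1)
    (ha : a ∈ cross d) (h : ⟪u, a⟫ = 1) {j : Fin d} (hj : |u j| < 1) : a j = 0 := by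
  have hle (i : Fin d) : u i * a i ≤ |a i| :=
    (le_abs_self _).trans (by rw [abs_mul]; exact mul_le_of_le_one_left (abs_nonneg _) (hu i))
  have hsum : ∑ i, u i * a i = ∑ i, |a i| :=
    le_antisymm (sum_le_sum fun i _ => hle i) (by rw [← inner_eq_sum_mul, h]; exact ha)
  have hj_eq := (sum_eq_sum_iff_of_le fun i _ => hle i).1 hsum j (mem_univ j)
  by_contra hne
  have : |u j * a j| < |a j| := by
    rw [abs_mul]; exact mul_lt_of_lt_one_left (abs_pos.2 hne) hj
  exact this.not_ge (hj_eq ▸ le_abs_self _)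

theorem mul_apply_eq_of_inner_eq_one_of_mem_smul_hcube {k : ℝ} (hk : 0 < k) {u b : 𝔼}
    (hsum : ∑ i, |u i| ≤ k) (hb : b ∈ (1 / k) • hcube d) (h : ⟪u, b⟫ = 1) (j : Fin d) :
    u j * b j = |u j| / k := by
  rw [mem_smul_hcube (by positivity)] at hb
  have hle (i : Fin d) : u i * b i ≤ |u i| / k :=
    (le_abs_self _).trans (by
      rw [abs_mul, div_eq_mul_one_div]; exact mul_le_mul_of_nonneg_left (hb i) (abs_nonneg _))
  have hsum' : ∑ i, u i * b i = ∑ i, |u i| / k := by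
    refine le_antisymm (sum_le_sum fun i _ => hle i) ?_
    rw [← inner_eq_sum_mul, h, ← sum_div, div_le_one hk]
    exact hsum
  exact (sum_eq_sum_iff_of_le fun i _ => hle i).1 hsum' j (mem_univ j)

def rhoFace (k : ℝ) (u : 𝔼) : Set 𝔼 := {x ∈ rho d k | ⟪u, x⟫ = 1}

theorem isExposed_rhoFace {k : ℝ} {u : 𝔼} (hu : ∀ y ∈ rho d k, ⟪u, y⟫ ≤ 1) :
    IsExposed ℝ (rho d k) (rhoFace k u) := by
  rintro ⟨x₀, hx₀, hux₀⟩
  refine ⟨innerSL ℝ u, Set.ext fun x => ?_⟩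
  simp only [rhoFace, innerSL_apply_apply, Set.mem_ofPred_eq]
  refine and_congr_right fun hx => ⟨fun h y hy => h ▸ hu y hy, fun h => ?_⟩
  exact le_antisymm (hu x hx) (hux₀ ▸ h x₀ hx₀)

theorem exists_eq_rhoFace_of_isExposed {k : ℝ} {F : Set 𝔼} (hF : IsExposed ℝ (rho d k) F)
    (hne : F.Nonempty) (hF_ne : F ≠ rho d k) :
    ∃ u : 𝔼, (∀ y ∈ rho d k, ⟪u, y⟫ ≤ 1) ∧ F = rhoFace k u := by
  obtain ⟨l, rfl⟩ := hF hne
  obtain ⟨x₀, hx₀, hmax⟩ := hne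
  set v : 𝔼 := (InnerProductSpace.toDual ℝ 𝔼).symm l
  have hl (y : 𝔼) : l y = ⟪v, y⟫ := (InnerProductSpace.toDual_symm_apply ..).symm
  set m := ⟪v, x₀⟫
  have hv_le (y : 𝔼) (hy : y ∈ rho d k) : ⟪v, y⟫ ≤ m := by simpa only [hl] using hmax y hy
  have hm : 0 < m := by
    by_contra! hm
    have hv : v = 0 := by
      ext i
      exact abs_nonpos_iff.1 ((abs_le_of_inner_le_on_rho hv_le i).trans hm)
    exact hF_ne (Set.ext fun x => ⟨fun hx => hx.1, fun hx => ⟨hx, fun y _ => by simp [hl, hv]⟩⟩)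
  refine ⟨m⁻¹ • v, fun y hy => ?_, Set.ext fun x => ?_⟩
  · rw [inner_smul_left, RCLike.conj_to_real, inv_mul_le_one₀ hm]
    exact hv_le y hy
  · simp only [rhoFace, Set.mem_ofPred_eq, hl, inner_smul_left, RCLike.conj_to_real,
      inv_mul_eq_one₀ hm.ne']
    exact and_congr_right fun hx =>
      ⟨fun h => le_antisymm (h x₀ hx₀) (hv_le x hx), fun h y hy => h ▸ hv_le y hy⟩

theorem eq_zero_of_inner_eq_zero_on_rhoFace {k : ℝ} (hk : 0 < k) {u w : 𝔼}
    (hu : ∀ y ∈ rho d k, ⟪u, y⟫ ≤ 1) (hne : (rhoFace k u).Nonempty)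
    (hdim : finrank ℝ (vectorSpan ℝ (rhoFace k u)) = d - 1)
    (hw_cross : ∀ a ∈ cross d, ⟪u, a⟫ = 1 → ⟪w, a⟫ = 0)
    (hw_cube : ∀ b ∈ (1 / k) • hcube d, ⟪u, b⟫ = 1 → ⟪w, b⟫ = 0) : w = 0 := by
  have h0 : (0 : 𝔼) ∈ (1 / k) • hcube d := (mem_smul_hcube (by positivity)).2 (by simp [hk.le])
  refine eq_zero_of_inner_eq_zero_of_finrank_vectorSpan_eq (fun x hx => hx.2) hne
    (by rwa [finrank_euclideanSpace_fin]) fun x hx => ?_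
  refine (isExposed_rhoFace hu).isExtreme.subset_of_convexHull_union convex_cross
    (convex_hcube.smul _) ⟨0, by simp [cross]⟩ ⟨0, h0⟩
    (convex_hyperplane (innerₛₗ ℝ w).isLinear 0) ?_ ?_ hx
  · exact fun a ⟨ha, ha'⟩ => hw_cross a ha' ha.2
  · exact fun b ⟨hb, hb'⟩ => hw_cube b hb' hb.2

theorem sum_abs_eq_of_facet {k : ℕ} (hk : 1 ≤ k) (hkd : k ≤ d) {u : 𝔼}
    (hu : ∀ y ∈ rho d k, ⟪u, y⟫ ≤ 1) (hne : (rhoFace k u).Nonempty)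
    (hdim : finrank ℝ (vectorSpan ℝ (rhoFace k u)) = d - 1) : ∑ i, |u i| = k := by
  have hk' : (0 : ℝ) < k := by exact_mod_cast hk
  have hsum := sum_abs_le_of_inner_le_on_rho hk' hu
  rw [mul_one] at hsum
  by_contra hne_sum
  have hlt : ∑ i, |u i| < ∑ _i : Fin d, (1 : ℝ) := by
    simpa using hsum.lt_of_ne hne_sum |>.trans_le (by exact_mod_cast hkd)
  obtain ⟨j, -, hj⟩ := exists_lt_of_sum_lt hlt
  have hu1 := abs_le_of_inner_le_on_rho hu
  suffices EuclideanSpace.single j (1 : ℝ) = 0 by simp at this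
  refine eq_zero_of_inner_eq_zero_on_rhoFace hk' hu hne hdim (fun a ha h => ?_) (fun b hb h => ?_)
  · simpa [EuclideanSpace.inner_single_left] using
      apply_eq_zero_of_inner_eq_one_of_mem_cross hu1 ha h hj
  · have hb' := mul_apply_eq_of_inner_eq_one_of_mem_smul_hcube hk' hsum hb h
    rw [inner_eq_sum_mul, sum_congr rfl fun i _ => hb' i, ← sum_div, div_eq_one_iff_eq hk'.ne'] at h
    exact absurd h hne_sum

theorem eq_of_abs_mem_Ioo_of_facet {k : ℕ} (hk : 1 ≤ k) {u : 𝔼}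
    (hu : ∀ y ∈ rho d k, ⟪u, y⟫ ≤ 1) (hne : (rhoFace k u).Nonempty)
    (hdim : finrank ℝ (vectorSpan ℝ (rhoFace k u)) = d - 1) {i j : Fin d}
    (hi : |u i| ∈ Set.Ioo 0 1) (hj : |u j| ∈ Set.Ioo 0 1) : i = j := by
  have hk' : (0 : ℝ) < k := by exact_mod_cast hk
  have hsum := sum_abs_le_of_inner_le_on_rho hk' hu
  rw [mul_one] at hsum
  have hu1 := abs_le_of_inner_le_on_rho hu
  have hsign {b : 𝔼} (hb : b ∈ (1 / (k : ℝ)) • hcube d) (h : ⟪u, b⟫ = 1) {l : Fin d}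
      (hl : 0 < |u l|) : SignType.sign (u l) * b l = 1 / k := by
    refine mul_right_cancel₀ hl.ne' ?_
    calc SignType.sign (u l) * b l * |u l| = (SignType.sign (u l) * |u l|) * b l := by ring
      _ = u l * b l := by rw [sign_mul_abs]
      _ = 1 / k * |u l| := by
        rw [mul_apply_eq_of_inner_eq_one_of_mem_smul_hcube hk' hsum hb h]; ring
  by_contra hij
  set w : 𝔼 := EuclideanSpace.single i (SignType.sign (u i) : ℝ) -
    EuclideanSpace.single j (SignType.sign (u j) : ℝ)
  have hw : w = 0 := by
    refine eq_zero_of_inner_eq_zero_on_rhoFace hk' hu hne hdim (fun a ha h => ?_) (fun b hb h => ?_)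
    · simp [w, inner_sub_left, EuclideanSpace.inner_single_left,
        apply_eq_zero_of_inner_eq_one_of_mem_cross hu1 ha h hi.2,
        apply_eq_zero_of_inner_eq_one_of_mem_cross hu1 ha h hj.2]
    · simp only [w, inner_sub_left, EuclideanSpace.inner_single_left, RCLike.conj_to_real,
        hsign hb h hi.1, hsign hb h hj.1, sub_self]
  have := congrArg (· i) hw
  rcases lt_trichotomy (u i) 0 with h | h | h <;> simp [w, hij, h] at this hi

def signVec (ε : Fin d → SignType) : 𝔼 := WithLp.toLp 2 fun i => (ε i : ℝ)

theorem signVec_injective : Function.Injective (signVec (d := d)) := by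
  intro ε ε' h
  funext i
  have : (ε i : ℝ) = ε' i := congrArg (· i) h
  generalize ε i = a, ε' i = b at this
  cases a <;> cases b <;> norm_num at this <;> rfl

theorem abs_signVec_apply (ε : Fin d → SignType) (i : Fin d) :
    |signVec ε i| = if ε i = 0 then 0 else 1 := by
  simp only [signVec, PiLp.toLp_apply]
  cases ε i <;> simp

theorem signVec_apply_mul_self (ε : Fin d → SignType) (i : Fin d) :
    signVec ε i * signVec ε i = |signVec ε i| := by
  simp only [signVec, PiLp.toLp_apply]
  cases ε i <;> simp

theorem sum_abs_signVec (ε : Fin d → SignType) :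
    ∑ i, |signVec ε i| = #{i | ε i ≠ 0} := by
  simp [abs_signVec_apply, natCast_card_filter, ite_not]

section SignVector

variable {k : ℕ} {ε : Fin d → SignType}

theorem inner_signVec_le_one (hk : 1 ≤ k) (hε : #{i | ε i ≠ 0} = k) {y : 𝔼}
    (hy : y ∈ rho d k) : ⟪signVec ε, y⟫ ≤ 1 := by
  refine inner_le_one_of_mem_rho (by exact_mod_cast hk) (fun i => ?_) ?_ hy
  · rw [abs_signVec_apply]; split_ifs <;> norm_num
  · rw [sum_abs_signVec, hε]

theorem smul_signVec_mem_rhoFace (hk : 1 ≤ k) (hε : #{i | ε i ≠ 0} = k) :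
    (k : ℝ)⁻¹ • signVec ε ∈ rhoFace k (signVec ε) := by
  have hk' : (0 : ℝ) < k := by exact_mod_cast hk
  refine ⟨smul_hcube_subset_rho _ ((mem_smul_hcube (by positivity)).2 fun i => ?_), ?_⟩
  · rw [PiLp.smul_apply, smul_eq_mul, abs_mul, abs_signVec_apply, one_div]
    split_ifs <;> simp [hk'.le]
  · rw [inner_smul_right, inner_eq_sum_mul]
    simp_rw [signVec_apply_mul_self, sum_abs_signVec, hε]
    exact inv_mul_cancel₀ hk'.ne'

theorem single_mem_rhoFace {i : Fin d} (hi : ε i ≠ 0) :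
    EuclideanSpace.single i (signVec ε i) ∈ rhoFace k (signVec ε) := by
  have habs : |signVec ε i| = 1 := by simp [abs_signVec_apply, hi]
  refine ⟨cross_subset_rho _ (single_mem_cross i habs.le), ?_⟩
  rw [EuclideanSpace.inner_single_right, RCLike.conj_to_real, signVec_apply_mul_self, habs]

theorem smul_signVec_add_single_mem_rhoFace (hk : 1 ≤ k) (hε : #{i | ε i ≠ 0} = k) {i : Fin d}
    (hi : ε i = 0) :
    (k : ℝ)⁻¹ • signVec ε + EuclideanSpace.single i (k : ℝ)⁻¹ ∈ rhoFace k (signVec ε) := by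
  have hk' : (0 : ℝ) < k := by exact_mod_cast hk
  have hsi : signVec ε i = 0 := by simp [signVec, hi]
  refine ⟨smul_hcube_subset_rho _ ((mem_smul_hcube (by positivity)).2 fun j => ?_), ?_⟩
  · by_cases hj : j = i
    · subst hj; simp [hsi]
    · rw [PiLp.add_apply, PiLp.smul_apply, PiLp.single_apply, if_neg hj, add_zero, smul_eq_mul,
        abs_mul, abs_signVec_apply, one_div]
      split_ifs <;> simp [hk'.le]
  · rw [inner_add_right, (smul_signVec_mem_rhoFace hk hε).2, EuclideanSpace.inner_single_right,
      RCLike.conj_to_real, hsi, mul_zero, add_zero]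

theorem vectorSpan_rhoFace_signVec (hk : 1 ≤ k) (hε : #{i | ε i ≠ 0} = k) :
    vectorSpan ℝ (rhoFace k (signVec ε)) = (ℝ ∙ signVec ε)ᗮ := by
  refine le_antisymm (vectorSpan_le_orthogonal_of_inner_eq fun x hx => hx.2) fun w hw => ?_
  rw [Submodule.mem_orthogonal_singleton_iff_inner_right, inner_eq_sum_mul] at hw
  set s := signVec ε
  set q := (k : ℝ)⁻¹ • s
  have hq := smul_signVec_mem_rhoFace hk hε
  -- Each `e i - s i • q` is a difference of two points of the face, and these vectors span `s^⊥`
  -- because `w = ∑ i, w i • (e i - s i • q) + ⟪s, w⟫ • q`.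
  have hdir (i : Fin d) : EuclideanSpace.single i 1 - s i • q ∈ vectorSpan ℝ (rhoFace k s) := by
    by_cases hi : ε i = 0
    · have hsi : s i = 0 := by simp [s, signVec, hi]
      convert Submodule.smul_mem _ (k : ℝ)
        (vsub_mem_vectorSpan ℝ (smul_signVec_add_single_mem_rhoFace hk hε hi) hq) using 1
      have hk' : (k : ℝ) ≠ 0 := by exact_mod_cast (by omega : k ≠ 0)
      ext j
      simp [hsi, PiLp.single_apply, q, s, hk']
    · convert Submodule.smul_mem _ (s i) (vsub_mem_vectorSpan ℝ (single_mem_rhoFace hi) hq) using 1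
      ext j
      by_cases hj : j = i
      · subst hj; simp [mul_sub, ← mul_assoc, signVec_apply_mul_self, abs_signVec_apply, hi, s, q]
      · simp [hj, s, q]
  have hw_eq : w = ∑ i, w i • (EuclideanSpace.single i 1 - s i • q) + (∑ i, s i * w i) • q := by
    ext j
    simp [mul_sub, Pi.single_apply, sum_mul, WithLp.ofLp_sum, mul_assoc, mul_comm (s _)]
  rw [hw_eq, hw, zero_smul, add_zero]
  exact Submodule.sum_mem _ fun i _ => Submodule.smul_mem _ _ (hdir i)

theorem finrank_vectorSpan_rhoFace_signVec (hk : 1 ≤ k) (hε : #{i | ε i ≠ 0} = k) :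
    finrank ℝ (vectorSpan ℝ (rhoFace k (signVec ε))) = d - 1 := by
  have hs : signVec ε ≠ 0 := by
    intro h
    have := sum_abs_signVec ε
    rw [h, hε] at this
    simp only [PiLp.zero_apply, abs_zero, sum_const_zero] at this
    exact Nat.one_le_iff_ne_zero.1 hk (by exact_mod_cast this.symm)
  rw [vectorSpan_rhoFace_signVec hk hε, finrank_orthogonal_span_singleton_eq_sub_one hs,
    finrank_euclideanSpace_fin]

theorem rhoFace_signVec_injOn (hk : 1 ≤ k) :
    Set.InjOn (fun ε => rhoFace k (signVec ε)) {ε : Fin d → SignType | #{i | ε i ≠ 0} = k} := by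
  intro ε hε ε' _ h
  apply signVec_injective
  rw [← sub_eq_zero]
  refine eq_zero_of_inner_eq_zero_of_finrank_vectorSpan_eq (fun x hx => hx.2)
    ⟨_, smul_signVec_mem_rhoFace hk hε⟩
    (by rw [finrank_vectorSpan_rhoFace_signVec hk hε, finrank_euclideanSpace_fin]) fun x hx => ?_
  have h' : rhoFace k (signVec ε) = rhoFace k (signVec ε') := h
  have hx' := h' ▸ hx
  rw [inner_sub_left, hx.2, hx'.2, sub_self]

theorem exists_signVec_eq_of_facet (hk : 1 ≤ k) (hkd : k ≤ d) {u : 𝔼}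
    (hu : ∀ y ∈ rho d k, ⟪u, y⟫ ≤ 1) (hne : (rhoFace k u).Nonempty)
    (hdim : finrank ℝ (vectorSpan ℝ (rhoFace k u)) = d - 1) :
    ∃ ε : Fin d → SignType, #{i | ε i ≠ 0} = k ∧ u = signVec ε := by
  have hsum := sum_abs_eq_of_facet hk hkd hu hne hdim
  have h01 := abs_eq_zero_or_one_of_sum_abs_eq hsum (abs_le_of_inner_le_on_rho hu)
    fun _ _ => eq_of_abs_mem_Ioo_of_facet hk hu hne hdim
  have hu_eq : u = signVec fun i => SignType.sign (u i) := by
    ext i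
    rcases h01 i with h | h
    · simp [signVec, abs_eq_zero.1 h]
    · simpa [signVec, h] using (sign_mul_abs (u i)).symm
  refine ⟨_, ?_, hu_eq⟩
  have := sum_abs_signVec fun i => SignType.sign (u i)
  rw [← hu_eq, hsum] at this
  exact_mod_cast this.symm

end SignVector

end Rho

/-- For integer `k` with `1 ≤ k ≤ d`, the polytope `ρ_{d,k}` has `2^k · binom(d,k)` facets,
i.e. `(d-1)`-dimensional exposed faces. -/
theorem card_facets_rho (d k : ℕ) (hd : 1 ≤ d) (hk1 : 1 ≤ k) (hkd : k ≤ d) :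
    {F : Set (EuclideanSpace ℝ (Fin d)) | IsExposed ℝ (rho d (k : ℝ)) F ∧ F.Nonempty ∧
        Module.finrank ℝ (vectorSpan ℝ F) = d - 1}.ncard = 2 ^ k * d.choose k := by
  have hfacets : {F : Set (EuclideanSpace ℝ (Fin d)) | IsExposed ℝ (rho d (k : ℝ)) F ∧
      F.Nonempty ∧ finrank ℝ (vectorSpan ℝ F) = d - 1} =
      (fun ε => rhoFace k (signVec ε)) '' {ε : Fin d → SignType | #{i | ε i ≠ 0} = k} := by
    ext F
    constructor
    · rintro ⟨hexp, hne, hdim⟩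
      have hF_ne : F ≠ rho d k := by
        rintro rfl
        rw [vectorSpan_rho, finrank_top, finrank_euclideanSpace_fin] at hdim
        omega
      obtain ⟨u, hu, rfl⟩ := exists_eq_rhoFace_of_isExposed hexp hne hF_ne
      obtain ⟨ε, hε, rfl⟩ := exists_signVec_eq_of_facet hk1 hkd hu hne hdim
      exact ⟨ε, hε, rfl⟩
    · rintro ⟨ε, hε, rfl⟩
      exact ⟨isExposed_rhoFace fun y => inner_signVec_le_one hk1 hε,
        ⟨_, smul_signVec_mem_rhoFace hk1 hε⟩, finrank_vectorSpan_rhoFace_signVec hk1 hε⟩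
  rw [hfacets, (rhoFace_signVec_injOn hk1).ncard_image, Set.ncard_eq_toFinset_card',
    Set.toFinset_ofPred, card_signType_fun_with_card_ne_zero, Fintype.card_fin, mul_comm]
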